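/- For every integer k ≥ 3 and real parameter t, the depth-two sum formula for interpolated double zeta values holds: ∑_{a=2}^{k-1} ζ^t(a, k-a) = (1 + (k-2)·t) · ζ(k), where ζ^t(a,b) = ζ(a,b) + t·ζ(a+b). -/

import Mathlib

open Finset

/-- The Riemann zeta value `ζ(s) = ∑_{m ≥ 1} 1/m^s`. -/
noncomputable def zetaVal (s : ℕ) : ℝ :=
  ∑' m : ℕ, if 1 ≤ m then 1 / (m : ℝ) ^ s else 0

/-- The double zeta value `ζ(a,b) = ∑_{m > n ≥ 1} 1/(m^a n^b)`. -/
noncomputable def doubleZeta (a b : ℕ) : ℝ :=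
  ∑' p : ℕ × ℕ, if 1 ≤ p.2 ∧ p.2 < p.1 then 1 / ((p.1 : ℝ) ^ a * (p.2 : ℝ) ^ b) else 0

/-- The interpolated double zeta value `ζ^t(a,b) = ζ(a,b) + t·ζ(a+b)`. -/
noncomputable def tDoubleZeta (t : ℝ) (a b : ℕ) : ℝ :=
  doubleZeta a b + t * zetaVal (a + b)

/-!
For `m > n ≥ 1` the partial fraction identity
`∑_{a=2}^{k-1} 1 / (m^a n^(k-a)) + 1 / ((m - n) m^(k-1)) = 1 / (n^(k-2) (m - n) m)`
sums, after the reflection `n ↦ m - n` in the second term, to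
`∑_a ζ(a, k-a) + ζ(k-1, 1) = E` with `E = ∑_{m>n≥1} 1 / (n^(k-2) (m - n) m)`.
Summing `E` over the gap first, `∑_{d≥1} n / (d (n + d)) = H_n` gives
`E = ∑_n H_n / n^(k-1) = ζ(k) + ζ(k-1, 1)`, and `ζ(k-1, 1) < ∞` cancels for `k ≥ 3`.
All terms are nonnegative, so the rearrangements are carried out in `ℝ≥0∞`.
-/

open Filter Topology ENNReal

lemma hasSum_sub_succ_of_antitone {f : ℕ → ℝ} (hf : Antitone f)
    (hlim : Tendsto f atTop (𝓝 0)) : HasSum (fun n ↦ f n - f (n + 1)) (f 0) := by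
  rw [hasSum_iff_tendsto_nat_of_nonneg fun n ↦ sub_nonneg.mpr (hf n.le_succ)]
  simp_rw [Finset.sum_range_sub']
  simpa using tendsto_const_nhds.sub hlim

lemma hasSum_one_div_add_mul_add_add_one {c : ℝ} (hc : 0 < c) :
    HasSum (fun n : ℕ ↦ 1 / ((n + c) * (n + c + 1))) (1 / c) := by
  have hanti : Antitone fun n : ℕ ↦ 1 / ((n : ℝ) + c) := fun m n hmn ↦
    one_div_le_one_div_of_le (by positivity) (by gcongr)
  have hlim : Tendsto (fun n : ℕ ↦ 1 / ((n : ℝ) + c)) atTop (𝓝 0) := by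
    simp only [one_div]
    exact (tendsto_natCast_atTop_atTop.atTop_add tendsto_const_nhds).inv_tendsto_atTop
  convert hasSum_sub_succ_of_antitone hanti hlim using 1
  · ext n
    push_cast
    field_simp
    ring
  · simp

lemma hasSum_one_div_succ_mul_add (n : ℕ) :
    HasSum (fun d : ℕ ↦ 1 / (((d : ℝ) + 1) * (n + d + 2)))
      (∑ j ∈ range (n + 1), 1 / (((j : ℝ) + 1) * (n + 1))) := by
  have htel : ∀ d : ℕ, 1 / (((d : ℝ) + 1) * (n + d + 2)) =
      ∑ j ∈ range (n + 1),
        1 / ((n : ℝ) + 1) * (1 / ((d + (j + 1)) * (d + (j + 1) + 1))) := by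
    intro d
    have hsplit : ∀ j : ℕ, 1 / (((d : ℝ) + (j + 1)) * (d + (j + 1) + 1)) =
        1 / ((d : ℝ) + (j : ℕ) + 1) - 1 / ((d : ℝ) + ((j + 1 : ℕ) : ℝ) + 1) := by
      intro j
      push_cast
      field_simp
      ring
    rw [← mul_sum, sum_congr rfl fun j _ ↦ hsplit j, sum_range_sub']
    push_cast
    field_simp
    ring
  have hval : ∑ j ∈ range (n + 1), 1 / (((j : ℝ) + 1) * (n + 1)) =
      ∑ j ∈ range (n + 1), 1 / ((n : ℝ) + 1) * (1 / ((j : ℝ) + 1)) :=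
    sum_congr rfl fun j _ ↦ by rw [one_div_mul_one_div, mul_comm]
  simp_rw [htel, hval]
  exact hasSum_sum fun j _ ↦
    (hasSum_one_div_add_mul_add_add_one (c := (j : ℝ) + 1) (by positivity)).mul_left _

lemma sum_range_one_div_pow_mul_pow_add {K : Type*} [Field K] {x y : K} (hx : x ≠ 0)
    (hy : y ≠ 0) (hxy : x ≠ y) (n : ℕ) :
    ∑ i ∈ range n, 1 / (x ^ (i + 2) * y ^ (n - i)) + 1 / ((x - y) * x ^ (n + 1)) =
      1 / (y ^ n * (x - y) * x) := by
  have hxy : x - y ≠ 0 := sub_ne_zero.mpr hxy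
  induction n with
  | zero => simp [mul_comm]
  | succ n ih =>
    have hshift : ∀ i ∈ range n, 1 / (x ^ (i + 1 + 2) * y ^ (n + 1 - (i + 1))) =
        x⁻¹ * (1 / (x ^ (i + 2) * y ^ (n - i))) := fun i _ ↦ by
      rw [Nat.add_sub_add_right, add_right_comm, pow_succ]
      field_simp
    rw [sum_range_succ', sum_congr rfl hshift, ← mul_sum, eq_sub_of_add_eq ih, Nat.sub_zero]
    field_simp
    ring

lemma sum_Icc_one_div_pow_mul_pow_add {K : Type*} [Field K] {x y : K} (hx : x ≠ 0)
    (hy : y ≠ 0) (hxy : x ≠ y) {k : ℕ} (hk : 2 ≤ k) :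
    ∑ a ∈ Icc 2 (k - 1), 1 / (x ^ a * y ^ (k - a)) + 1 / ((x - y) * x ^ (k - 1)) =
      1 / (y ^ (k - 2) * (x - y) * x) := by
  obtain ⟨n, rfl⟩ : ∃ n, k = n + 2 := ⟨k - 2, by omega⟩
  rw [Nat.add_sub_cancel, show n + 2 - 1 = n + 1 by omega, ← Ico_add_one_right_eq_Icc,
    sum_Ico_eq_sum_range, show n + 1 + 1 - 2 = n by omega,
    ← sum_range_one_div_pow_mul_pow_add hx hy hxy n]
  congr 1
  refine sum_congr rfl fun i _ ↦ ?_
  rw [add_comm 2 i, Nat.add_sub_add_right]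

lemma ENNReal.tsum_sum_antidiagonal (f : ℕ × ℕ → ℝ≥0∞) :
    ∑' n, ∑ p ∈ antidiagonal n, f p = ∑' p, f p := by
  rw [← HasAntidiagonal.sigmaAntidiagonalEquivProd.tsum_eq, ENNReal.tsum_sigma']
  simp [sum_attach]

lemma ENNReal.tsum_sum_range_succ (f : ℕ → ℕ → ℝ≥0∞) :
    ∑' n, ∑ j ∈ range (n + 1), f j n = ∑' j, ∑' e, f j (j + e) := by
  rw [← ENNReal.tsum_prod' (f := fun p ↦ f p.1 (p.1 + p.2)), ← ENNReal.tsum_sum_antidiagonal]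
  refine tsum_congr fun n ↦ ?_
  rw [Nat.sum_antidiagonal_eq_sum_range_succ fun j e ↦ f j (j + e)]
  exact sum_congr rfl fun j hj ↦ by rw [Nat.add_sub_cancel' (mem_range_succ_iff.mp hj)]

lemma HasSum.tsum_ofReal {α : Type*} {f : α → ℝ} {a : ℝ} (h : HasSum f a)
    (hf : ∀ x, 0 ≤ f x) :
    ∑' x, ENNReal.ofReal (f x) = ENNReal.ofReal a := by
  rw [← ENNReal.ofReal_tsum_of_nonneg hf h.summable, h.tsum_eq]

lemma ENNReal.toReal_tsum_ofReal {α : Type*} {f : α → ℝ} (hf : ∀ x, 0 ≤ f x) :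
    (∑' x, ENNReal.ofReal (f x)).toReal = ∑' x, f x := by
  rw [ENNReal.tsum_toReal_eq fun _ ↦ ENNReal.ofReal_ne_top]
  exact tsum_congr fun x ↦ ENNReal.toReal_ofReal (hf x)

lemma summable_one_div_nat_add_one_pow {s : ℕ} (hs : 2 ≤ s) :
    Summable fun n : ℕ ↦ 1 / ((n : ℝ) + 1) ^ s := by
  simpa using (summable_nat_add_iff 1).mpr (Real.summable_one_div_nat_pow.mpr hs)

noncomputable def zetaENNReal (s : ℕ) : ℝ≥0∞ :=
  ∑' n : ℕ, ENNReal.ofReal (1 / ((n : ℝ) + 1) ^ s)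

-- `ζ(a, b)` over `(m, n) = (n + d + 2, n + 1)`, which frees the constraint `m > n ≥ 1`.
noncomputable def doubleZetaENNReal (a b : ℕ) : ℝ≥0∞ :=
  ∑' n : ℕ, ∑' d : ℕ, ENNReal.ofReal (1 / (((n : ℝ) + d + 2) ^ a * ((n : ℝ) + 1) ^ b))

lemma zetaVal_eq_toReal (s : ℕ) : zetaVal s = (zetaENNReal s).toReal := by
  rw [zetaENNReal, toReal_tsum_ofReal fun n ↦ by positivity, zetaVal,
    ← (add_left_injective 1).tsum_eq]
  · simp
  · rintro (_ | n) h0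
    · exact absurd (if_neg (by omega)) h0
    · exact ⟨n, rfl⟩

lemma doubleZeta_eq_toReal (a b : ℕ) : doubleZeta a b = (doubleZetaENNReal a b).toReal := by
  have he : Function.Injective fun q : ℕ × ℕ ↦ (q.1 + q.2 + 2, q.1 + 1) := by
    intro q r h
    simp only [Prod.mk.injEq] at h
    ext <;> omega
  have hpairs : doubleZetaENNReal a b = ∑' q : ℕ × ℕ,
      ENNReal.ofReal (1 / (((q.1 : ℝ) + q.2 + 2) ^ a * ((q.1 : ℝ) + 1) ^ b)) := by
    rw [doubleZetaENNReal, ENNReal.tsum_prod']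
  rw [hpairs, toReal_tsum_ofReal fun q ↦ by positivity, doubleZeta, ← he.tsum_eq]
  · refine tsum_congr fun q ↦ ?_
    rw [if_pos (by omega)]
    push_cast
    ring_nf
  · intro p hp
    obtain ⟨h1, h2⟩ : 1 ≤ p.2 ∧ p.2 < p.1 := by
      by_contra h
      exact hp (if_neg h)
    exact ⟨(p.2 - 1, p.1 - p.2 - 1), Prod.ext (by dsimp; omega) (by dsimp; omega)⟩

-- `∑_{m > n ≥ 1} 1 / (n ^ (k - 2) (m - n) m)`, in the coordinates of `doubleZetaENNReal`
noncomputable def eulerSumENNReal (k : ℕ) : ℝ≥0∞ :=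
  ∑' n : ℕ, ∑' d : ℕ,
    ENNReal.ofReal (1 / (((n : ℝ) + 1) ^ (k - 2) * (d + 1) * (n + d + 2)))

lemma doubleZetaENNReal_ne_top {a b : ℕ} (ha : 2 ≤ a) (hb : 1 ≤ b) :
    doubleZetaENNReal a b ≠ ∞ := by
  have hbound : ∀ n d : ℕ, 1 / (((n : ℝ) + d + 2) ^ a * ((n : ℝ) + 1) ^ b) ≤
      1 / ((n : ℝ) + 1) * (1 / ((d + ((n : ℝ) + 1)) * (d + ((n : ℝ) + 1) + 1))) := by
    intro n d
    rw [one_div_mul_one_div]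
    gcongr 1 / ?_
    calc ((n : ℝ) + 1) * ((d + ((n : ℝ) + 1)) * (d + ((n : ℝ) + 1) + 1))
        ≤ (n + d + 2) ^ 2 * (n + 1) := by nlinarith
      _ ≤ (n + d + 2) ^ a * (n + 1) ^ b := by
        gcongr
        · linarith
        · exact le_self_pow₀ (by linarith) (by omega)
  refine ne_top_of_le_ne_top ?_ (ENNReal.tsum_le_tsum fun n ↦ ENNReal.tsum_le_tsum fun d ↦
    ENNReal.ofReal_le_ofReal (hbound n d))
  simp_rw [fun n : ℕ ↦ ((hasSum_one_div_add_mul_add_add_one (c := (n : ℝ) + 1)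
    (by positivity)).mul_left (1 / ((n : ℝ) + 1))).tsum_ofReal fun d ↦ by positivity]
  refine Summable.tsum_ofReal_ne_top ((summable_one_div_nat_add_one_pow le_rfl).congr fun n ↦ ?_)
  rw [one_div_mul_one_div, sq]

lemma eulerSumENNReal_eq {k : ℕ} (hk : 2 ≤ k) :
    eulerSumENNReal k = zetaENNReal k + doubleZetaENNReal (k - 1) 1 := by
  have hpow : ∀ x : ℝ, x ^ (k - 1) = x ^ (k - 2) * x := fun x ↦ by
    rw [← pow_succ]; congr 1; omega
  have hinner : ∀ n : ℕ, HasSum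
      (fun d : ℕ ↦ 1 / (((n : ℝ) + 1) ^ (k - 2) * (d + 1) * (n + d + 2)))
      (∑ j ∈ range (n + 1), 1 / (((j : ℝ) + 1) * (n + 1) ^ (k - 1))) := fun n ↦ by
    have h := (hasSum_one_div_succ_mul_add n).mul_left (1 / ((n : ℝ) + 1) ^ (k - 2))
    rw [mul_sum] at h
    have hvalue : ∑ j ∈ range (n + 1), 1 / (((j : ℝ) + 1) * (n + 1) ^ (k - 1)) =
        ∑ j ∈ range (n + 1), 1 / ((n : ℝ) + 1) ^ (k - 2) * (1 / ((j + 1) * (n + 1))) :=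
      sum_congr rfl fun j _ ↦ by rw [one_div_mul_one_div, hpow]; ring
    rw [hvalue]
    exact h.congr_fun fun d ↦ by rw [one_div_mul_one_div, mul_assoc]
  calc eulerSumENNReal k = ∑' n : ℕ, ∑ j ∈ range (n + 1),
          ENNReal.ofReal (1 / (((j : ℝ) + 1) * (n + 1) ^ (k - 1))) :=
        tsum_congr fun n ↦ by
          rw [(hinner n).tsum_ofReal fun d ↦ by positivity,
            ENNReal.ofReal_sum_of_nonneg fun j _ ↦ by positivity]
    _ = ∑' j : ℕ, ∑' e : ℕ,
          ENNReal.ofReal (1 / (((j : ℝ) + 1) * ((j + e : ℕ) + 1) ^ (k - 1))) :=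
        ENNReal.tsum_sum_range_succ fun j n ↦
          ENNReal.ofReal (1 / (((j : ℝ) + 1) * (n + 1) ^ (k - 1)))
    _ = ∑' j : ℕ, (ENNReal.ofReal (1 / ((j : ℝ) + 1) ^ k) +
          ∑' e : ℕ,
            ENNReal.ofReal (1 / (((j : ℝ) + e + 2) ^ (k - 1) * ((j : ℝ) + 1) ^ 1))) :=
        tsum_congr fun j ↦ by
          rw [tsum_eq_zero_add' ENNReal.summable]
          congr 2
          · push_cast
            rw [add_zero, ← pow_succ', Nat.sub_add_cancel (by omega)]
          · ext e; push_cast; ring_nf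
    _ = _ := ENNReal.tsum_add

lemma sum_doubleZetaENNReal_add_doubleZetaENNReal {k : ℕ} (hk : 2 ≤ k) :
    ∑ a ∈ Icc 2 (k - 1), doubleZetaENNReal a (k - a) + doubleZetaENNReal (k - 1) 1 =
      eulerSumENNReal k := by
  -- the reflection `n ↦ m - n` of the summation range
  have hreflect : doubleZetaENNReal (k - 1) 1 = ∑' n : ℕ, ∑' d : ℕ,
      ENNReal.ofReal (1 / (((d : ℝ) + 1) * (n + d + 2) ^ (k - 1))) := by
    rw [doubleZetaENNReal, ENNReal.tsum_comm]
    exact tsum_congr fun n ↦ tsum_congr fun d ↦ by ring_nf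
  simp_rw [hreflect, doubleZetaENNReal, ← Summable.tsum_finsetSum fun _ _ ↦ ENNReal.summable,
    ← ENNReal.tsum_add]
  refine tsum_congr fun n ↦ tsum_congr fun d ↦ ?_
  have hgap : ((n : ℝ) + d + 2) - (n + 1) = d + 1 := by ring
  have hpartial := sum_Icc_one_div_pow_mul_pow_add (x := (n : ℝ) + d + 2) (y := (n : ℝ) + 1)
    (by positivity) (by positivity) (by rw [← sub_ne_zero, hgap]; positivity) hk
  rw [hgap] at hpartial
  rw [← ENNReal.ofReal_sum_of_nonneg fun a _ ↦ by positivity,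
    ← ENNReal.ofReal_add (sum_nonneg fun a _ ↦ by positivity) (by positivity), hpartial]

lemma sum_doubleZetaENNReal_eq_zetaENNReal {k : ℕ} (hk : 3 ≤ k) :
    ∑ a ∈ Icc 2 (k - 1), doubleZetaENNReal a (k - a) = zetaENNReal k := by
  have h := sum_doubleZetaENNReal_add_doubleZetaENNReal (k := k) (by omega)
  rw [eulerSumENNReal_eq (by omega)] at h
  exact (ENNReal.add_left_inj (doubleZetaENNReal_ne_top (by omega) le_rfl)).mp h

theorem sum_formula_depth_two (t : ℝ) (k : ℕ) (hk : 3 ≤ k) :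
    ∑ a ∈ Finset.Icc 2 (k - 1), tDoubleZeta t a (k - a) =
      (1 + ((k : ℝ) - 2) * t) * zetaVal k := by
  have hsum : ∑ a ∈ Icc 2 (k - 1), doubleZeta a (k - a) = zetaVal k := by
    have hfinite : ∀ a ∈ Icc 2 (k - 1), doubleZetaENNReal a (k - a) ≠ ∞ := fun a ha ↦ by
      rw [mem_Icc] at ha
      exact doubleZetaENNReal_ne_top ha.1 (by omega)
    simp_rw [doubleZeta_eq_toReal, zetaVal_eq_toReal, ← ENNReal.toReal_sum hfinite,
      sum_doubleZetaENNReal_eq_zetaENNReal hk]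
  have hweight : ∀ a ∈ Icc 2 (k - 1),
      tDoubleZeta t a (k - a) = doubleZeta a (k - a) + t * zetaVal k := fun a ha ↦ by
    rw [mem_Icc] at ha
    rw [tDoubleZeta, Nat.add_sub_cancel' (by omega)]
  rw [sum_congr rfl hweight, sum_add_distrib, hsum, sum_const, Nat.card_Icc, nsmul_eq_mul,
    show k - 1 + 1 - 2 = k - 2 by omega, Nat.cast_sub (by omega)]
  push_cast
  ring
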